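/- arXiv:1203.4200 — 4 statements merged into one kernel-verified Lean document; each statement's English description precedes it below -/
import Mathlib

section
/- A rational function f in K(x) (K a field of characteristic zero) is the derivative with respect to x of some rational function g in K(x) if and only if the residue of f at every pole β in the algebraic closure of K is zero. -/
/-!
The residue of `h ∈ F(X)` at `γ` is the coefficient of `X⁻¹` in the Laurent expansion of
`h(X + γ)`. Residues of derivatives vanish: if `B = Xᵏ c` with `c(0) ≠ 0` and `W = A / c`, then
`(A / B)' = X^(-k-1) (X W' - k W)`, whose coefficient of `X⁻¹` is `k W_k - k W_k = 0`. This gives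
one direction, since `ι` commutes with the quotient rule and the residue at `β i` of the partial
fraction decomposition is `α i 0`.

Conversely, Hermite reduction over `K` (a Bézout identity `s p + t p' w = 1` for an irreducible
`p` with `p ∤ w` lowers the multiplicity of `p` in the denominator) writes `f = δ g + a / b` with
`b` squarefree. At a root `γ` of `b = (X - γ) q` the residue of `a / b` is `a(γ) / q(γ)`, so if
all residues vanish then every root of `b` is a root of `a`; as `b` is separable, `b ∣ a`, and
`a / b` is a polynomial, which has an antiderivative in characteristic zero.
-/

open Polynomial HahnSeries LaurentSeries
open scoped PowerSeries

namespace PowerSeries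

variable {F : Type*} [Field F]

lemma coeff_X_mul_derivative (W : F⟦X⟧) (k : ℕ) :
    coeff k (X * d⁄dX F W) = k * coeff k W := by
  cases k with
  | zero => simp
  | succ k => rw [coeff_succ_X_mul, coeff_derivative]; push_cast; ring

lemma X_mul_derivative_X_pow (k : ℕ) : X * d⁄dX F (X ^ k) = (k : F⟦X⟧) * X ^ k := by
  cases k with
  | zero => simp
  | succ k => rw [Derivation.leibniz_pow, derivative_X]; push_cast; ring

lemma coe_div_eq_single_mul {N D V : F⟦X⟧} (hD : D ≠ 0) {k : ℕ}
    (h : X ^ (k + 1) * N = D * V) :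
    (N : F⸨X⸩) / (D : F⸨X⸩) = single (-(k + 1 : ℤ)) 1 * (V : F⸨X⸩) := by
  have hD' : (D : F⸨X⸩) ≠ 0 := (map_ne_zero_iff _ ofPowerSeries_injective).mpr hD
  have h' := congrArg (ofPowerSeries ℤ F) h
  rw [map_mul, map_mul, ofPowerSeries_X_pow] at h'
  rw [div_eq_iff hD', mul_assoc, mul_comm (V : F⸨X⸩), ← h', ← mul_assoc, single_mul_single]
  simp

lemma coeff_neg_one_div_of_X_pow_mul_eq {N D V : F⟦X⟧} (hD : D ≠ 0) {k : ℕ}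
    (h : X ^ (k + 1) * N = D * V) : ((N : F⸨X⸩) / (D : F⸨X⸩)).coeff (-1) = coeff k V := by
  rw [coe_div_eq_single_mul hD h]
  have := coeff_single_mul_add (r := (1 : F)) (x := (V : F⸨X⸩)) (a := k) (b := -(k + 1 : ℤ))
  rw [show (k : ℤ) + -(k + 1) = -1 by ring, one_mul, coeff_coe] at this
  simpa [show ¬((k : ℤ) < 0) by omega] using this

lemma coeff_neg_one_div_of_constantCoeff_ne_zero (N : F⟦X⟧) {D : F⟦X⟧}
    (hD : constantCoeff D ≠ 0) : ((N : F⸨X⸩) / (D : F⸨X⸩)).coeff (-1) = 0 := by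
  have hD' : (D : F⸨X⸩) ≠ 0 :=
    (map_ne_zero_iff _ ofPowerSeries_injective).mpr fun h ↦ hD (by simp [h])
  have hND : (N : F⸨X⸩) / D = ((N * D⁻¹ : F⟦X⟧) : F⸨X⸩) := by
    rw [div_eq_iff hD', ← coe_mul, mul_assoc, PowerSeries.inv_mul_cancel _ hD, mul_one]
  rw [hND, coeff_coe]
  simp

lemma coeff_neg_one_quotientRule_eq_zero (A B : F⟦X⟧) :
    (((d⁄dX F A * B - A * d⁄dX F B : F⟦X⟧) : F⸨X⸩) / ((B ^ 2 : F⟦X⟧) : F⸨X⸩)).coeff (-1) = 0 := by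
  rcases eq_or_ne B 0 with rfl | hB
  · simp
  obtain ⟨k, c, hc, rfl⟩ : ∃ k c, constantCoeff c ≠ 0 ∧ B = X ^ k * c :=
    ⟨_, _, constantCoeff_divXPowOrder_eq_zero_iff.not.mpr hB, X_pow_order_mul_divXPowOrder.symm⟩
  obtain ⟨W, rfl⟩ : ∃ W, A = c * W :=
    ⟨A * c⁻¹, by rw [mul_left_comm, PowerSeries.mul_inv_cancel _ hc, mul_one]⟩
  rw [coeff_neg_one_div_of_X_pow_mul_eq (pow_ne_zero 2 hB) (k := k)
    (V := X * d⁄dX F W - (k : F⟦X⟧) * W)]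
  · rw [map_sub, coeff_X_mul_derivative, ← map_natCast (C (R := F)), coeff_C_mul, sub_self]
  · simp only [Derivation.leibniz, smul_eq_mul]
    linear_combination (-(X ^ k * c ^ 2 * W)) * X_mul_derivative_X_pow (F := F) k

end PowerSeries

namespace Polynomial

variable {F : Type*} [Field F]

lemma derivative_taylor (γ : F) (p : F[X]) :
    derivative (taylor γ p) = taylor γ (derivative p) := by
  simp [taylor_apply, derivative_comp]

lemma taylor_X_sub_C_self (γ : F) : taylor γ (X - C γ) = X := by
  simp [taylor_apply]

lemma constantCoeff_coe_taylor (γ : F) (p : F[X]) :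
    PowerSeries.constantCoeff (taylor γ p : F⟦X⟧) = p.eval γ := by
  rw [constantCoeff_coe, taylor_coeff_zero]

lemma exists_derivative_eq [CharZero F] (q : F[X]) : ∃ Q, derivative Q = q := by
  induction q using Polynomial.induction_on' with
  | add p q hp hq =>
    obtain ⟨P, rfl⟩ := hp
    obtain ⟨Q, rfl⟩ := hq
    exact ⟨P + Q, derivative_add⟩
  | monomial n a =>
    refine ⟨monomial (n + 1) (a / (n + 1)), ?_⟩
    rw [derivative_monomial, Nat.add_sub_cancel, Nat.cast_add_one,
      div_mul_cancel₀ _ (Nat.cast_add_one_ne_zero n)]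

end Polynomial

lemma exists_eq_irreducible_pow_mul_of_not_squarefree {M : Type*} [CommMonoidWithZero M]
    [UniqueFactorizationMonoid M] {v : M} (hv : v ≠ 0) (h : ¬Squarefree v) :
    ∃ p j w, Irreducible p ∧ ¬p ∣ w ∧ v = p ^ (j + 2) * w := by
  obtain ⟨p, hp, hpp⟩ : ∃ p, Irreducible p ∧ p * p ∣ v := by
    simpa [squarefree_iff_irreducible_sq_not_dvd_of_ne_zero hv] using h
  obtain ⟨n, w, hpw, rfl⟩ := WfDvdMonoid.max_power_factor hv hp
  have h2n : p ^ 2 ∣ p ^ n := hp.prime.pow_dvd_of_dvd_mul_right 2 hpw (by rwa [sq])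
  obtain ⟨j, rfl⟩ := Nat.exists_eq_add_of_le ((pow_dvd_pow_iff hp.ne_zero hp.not_isUnit).mp h2n)
  exact ⟨p, j, w, hp, hpw, by rw [add_comm]⟩

namespace RatFunc

section Residue

variable {F : Type*} [Field F]

noncomputable def taylorShift (γ : F) : RatFunc F ≃ₐ[F] RatFunc F :=
  IsFractionRing.fieldEquivOfAlgEquiv F (RatFunc F) (RatFunc F) (taylorEquiv γ)

noncomputable def residue (γ : F) : RatFunc F →+ F :=
  (coeff.addMonoidHom (-1)).comp
    ((algebraMap (RatFunc F) F⸨X⸩).toAddMonoidHom.comp (taylorShift γ).toAddMonoidHom)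

lemma taylorShift_algebraMap (γ : F) (p : F[X]) :
    taylorShift γ (algebraMap F[X] (RatFunc F) p) = algebraMap F[X] (RatFunc F) (taylor γ p) :=
  IsFractionRing.fieldEquivOfAlgEquiv_algebraMap _ _ _ _ p

lemma residue_algebraMap_div (γ : F) (a b : F[X]) :
    residue γ (algebraMap F[X] (RatFunc F) a / algebraMap F[X] (RatFunc F) b) =
      (((taylor γ a : F⟦X⟧) : F⸨X⸩) / ((taylor γ b : F⟦X⟧) : F⸨X⸩)).coeff (-1) := by
  show (algebraMap (RatFunc F) F⸨X⸩ (taylorShift γ _)).coeff (-1) = _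
  rw [map_div₀, taylorShift_algebraMap, taylorShift_algebraMap, map_div₀, coe_coe, coe_coe]
  rfl

lemma residue_div_of_eval_ne_zero (γ : F) (a : F[X]) {b : F[X]} (hb : b.eval γ ≠ 0) :
    residue γ (algebraMap F[X] (RatFunc F) a / algebraMap F[X] (RatFunc F) b) = 0 := by
  rw [residue_algebraMap_div]
  exact PowerSeries.coeff_neg_one_div_of_constantCoeff_ne_zero _
    (by rwa [constantCoeff_coe_taylor])

lemma residue_algebraMap (γ : F) (p : F[X]) : residue γ (algebraMap F[X] (RatFunc F) p) = 0 := by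
  simpa using residue_div_of_eval_ne_zero γ p (b := 1) (by simp)

lemma residue_div_X_sub_C_mul (γ : F) (a : F[X]) {q : F[X]} (hq : q.eval γ ≠ 0) :
    residue γ (algebraMap F[X] (RatFunc F) a /
      algebraMap F[X] (RatFunc F) ((Polynomial.X - Polynomial.C γ) * q)) =
        a.eval γ / q.eval γ := by
  rw [residue_algebraMap_div, taylor_mul, taylor_X_sub_C_self, Polynomial.coe_mul,
    Polynomial.coe_X, ← constantCoeff_coe_taylor γ a, ← constantCoeff_coe_taylor γ q]
  have hq' : PowerSeries.constantCoeff (taylor γ q : F⟦X⟧) ≠ 0 := by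
    rwa [constantCoeff_coe_taylor]
  have hq0 : (taylor γ q : F⟦X⟧) ≠ 0 := fun h ↦ hq' (by rw [h, map_zero])
  rw [PowerSeries.coeff_neg_one_div_of_X_pow_mul_eq (mul_ne_zero PowerSeries.X_ne_zero hq0)
    (k := 0) (V := (taylor γ a : F⟦X⟧) * (taylor γ q : F⟦X⟧)⁻¹)]
  · simp [div_eq_mul_inv]
  · rw [pow_one, mul_assoc, mul_left_comm _ (taylor γ a : F⟦X⟧),
      PowerSeries.mul_inv_cancel _ hq', mul_one]

lemma residue_C_div_X_sub_C_pow_self (γ c : F) (j : ℕ) :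
    residue γ (C c / (X - C γ) ^ (j + 1)) = if j = 0 then c else 0 := by
  rw [← algebraMap_C c, ← algebraMap_C γ, ← algebraMap_X, ← map_sub, ← map_pow,
    residue_algebraMap_div, taylor_C, taylor_pow, taylor_X_sub_C_self, Polynomial.coe_pow,
    Polynomial.coe_X, Polynomial.coe_C,
    PowerSeries.coeff_neg_one_div_of_X_pow_mul_eq (pow_ne_zero _ (by simp)) (k := j)
      (V := PowerSeries.C c) (by simp)]
  simp [PowerSeries.coeff_C]

lemma residue_C_div_X_sub_C_pow_of_ne {γ d : F} (h : d ≠ γ) (c : F) (j : ℕ) :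
    residue γ (C c / (X - C d) ^ (j + 1)) = 0 := by
  rw [← algebraMap_C c, ← algebraMap_C d, ← algebraMap_X, ← map_sub, ← map_pow]
  exact residue_div_of_eval_ne_zero γ _ (by simpa [sub_eq_zero] using h.symm)

lemma residue_sum_C_div_X_sub_C_pow [DecidableEq F] (γ d : F) (n : ℕ) (α : ℕ → F) :
    residue γ (∑ j ∈ Finset.range n, C (α j) / (X - C d) ^ (j + 1)) =
      if d = γ ∧ 0 < n then α 0 else 0 := by
  rw [map_sum]
  by_cases hd : d = γ
  · subst hd
    simp [residue_C_div_X_sub_C_pow_self, Finset.sum_ite_eq']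
  · simp [residue_C_div_X_sub_C_pow_of_ne hd, hd]

lemma residue_sum_sum_C_div_X_sub_C_pow [DecidableEq F] {ι : Type*} (s : Finset ι) (γ : F)
    (β : ι → F) (n : ι → ℕ) (α : ι → ℕ → F) :
    residue γ (∑ i ∈ s, ∑ j ∈ Finset.range (n i), C (α i j) / (X - C (β i)) ^ (j + 1)) =
      ∑ i ∈ s, if β i = γ ∧ 0 < n i then α i 0 else 0 := by
  simp_rw [map_sum (residue γ) _ s, residue_sum_C_div_X_sub_C_pow]

lemma residue_quotientRule_eq_zero (γ : F) (a b : F[X]) :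
    residue γ (algebraMap F[X] (RatFunc F) (derivative a * b - a * derivative b) /
      algebraMap F[X] (RatFunc F) (b ^ 2)) = 0 := by
  rw [residue_algebraMap_div, map_sub, taylor_mul, taylor_mul, taylor_pow, ← derivative_taylor,
    ← derivative_taylor, Polynomial.coe_sub, Polynomial.coe_mul, Polynomial.coe_mul,
    Polynomial.coe_pow, ← PowerSeries.derivative_coe, ← PowerSeries.derivative_coe]
  exact PowerSeries.coeff_neg_one_quotientRule_eq_zero _ _

lemma dvd_of_forall_residue_eq_zero [IsAlgClosed F] {a b : F[X]} (hb : Squarefree b)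
    (h : ∀ γ, residue γ (algebraMap F[X] (RatFunc F) a / algebraMap F[X] (RatFunc F) b) = 0) :
    b ∣ a := by
  rcases eq_or_ne a 0 with rfl | ha
  · exact dvd_zero b
  refine (IsAlgClosed.splits b).dvd_of_roots_le_roots hb.ne_zero ?_
  rw [Multiset.le_iff_subset (nodup_roots (PerfectField.separable_iff_squarefree.mpr hb))]
  intro γ hγ
  rw [mem_roots hb.ne_zero] at hγ
  rw [mem_roots ha]
  obtain ⟨q, rfl⟩ := dvd_iff_isRoot.mpr hγ
  have hq : q.eval γ ≠ 0 := by
    intro hq0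
    obtain ⟨r, rfl⟩ := dvd_iff_isRoot.mpr hq0
    exact not_isUnit_X_sub_C γ (hb _ ⟨r, by ring⟩)
  have hres := h γ
  rw [residue_div_X_sub_C_mul γ a hq, div_eq_zero_iff] at hres
  exact hres.resolve_right hq

end Residue

lemma ringHom_algebraMap_eq_map {K L : Type*} [Field K] [Field L] {φ : K →+* L}
    {ι : RatFunc K →+* RatFunc L} (hC : ∀ a, ι (C a) = C (φ a)) (hX : ι X = X) (q : K[X]) :
    ι (algebraMap K[X] (RatFunc K) q) = algebraMap L[X] (RatFunc L) (q.map φ) := by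
  suffices ι.comp (algebraMap K[X] (RatFunc K)) =
      (algebraMap L[X] (RatFunc L)).comp (Polynomial.mapRingHom φ) from RingHom.congr_fun this q
  ext a
  · simpa using hC a
  · simpa using hX

end RatFunc

section Derivation

open RatFunc

variable {K : Type*} [Field K]

lemma Derivation.ratFunc_algebraMap (δ : Derivation ℤ (RatFunc K) (RatFunc K))
    (hC : ∀ a, δ (C a) = 0) (hX : δ X = 1) (q : K[X]) :
    δ (algebraMap K[X] (RatFunc K) q) = algebraMap K[X] (RatFunc K) (derivative q) := by
  induction q using Polynomial.induction_on' with
  | add p q hp hq => rw [map_add, map_add, hp, hq, derivative_add, map_add]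
  | monomial n a =>
    rw [← C_mul_X_pow_eq_monomial, map_mul, Derivation.leibniz, map_pow, algebraMap_X,
      algebraMap_C, hC, Derivation.leibniz_pow, hX, derivative_C_mul_X_pow]
    simp [mul_assoc]

variable {δ : Derivation ℤ (RatFunc K) (RatFunc K)}
  (hδ : ∀ q, δ (algebraMap K[X] (RatFunc K) q) = algebraMap K[X] (RatFunc K) (derivative q))
include hδ

lemma Derivation.ratFunc_algebraMap_div (a b : K[X]) :
    δ (algebraMap K[X] (RatFunc K) a / algebraMap K[X] (RatFunc K) b) =
      algebraMap K[X] (RatFunc K) (derivative a * b - a * derivative b) /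
        algebraMap K[X] (RatFunc K) (b ^ 2) := by
  rw [Derivation.leibniz_div, hδ, hδ]
  simp only [smul_eq_mul, map_sub, map_mul, map_pow]
  ring

variable [CharZero K]

lemma RatFunc.exists_div_irreducible_pow_mul_eq_derivation_add {p w : K[X]} (hp : Irreducible p)
    (hpw : ¬p ∣ w) (j : ℕ) (u : K[X]) :
    ∃ g u', algebraMap K[X] (RatFunc K) u / algebraMap K[X] (RatFunc K) (p ^ (j + 2) * w) =
      δ g + algebraMap K[X] (RatFunc K) u' / algebraMap K[X] (RatFunc K) (p ^ (j + 1) * w) := by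
  obtain ⟨s, t, hst⟩ : IsCoprime p (derivative p * w) :=
    (PerfectField.separable_of_irreducible hp).mul_right (hp.coprime_iff_not_dvd.mpr hpw)
  have hw : w ≠ 0 := by rintro rfl; exact hpw (dvd_zero p)
  have hj : ((j : RatFunc K) + 1) ≠ 0 := by exact_mod_cast j.succ_ne_zero
  have hP : algebraMap K[X] (RatFunc K) p ≠ 0 := algebraMap_ne_zero hp.ne_zero
  have hW : algebraMap K[X] (RatFunc K) w ≠ 0 := algebraMap_ne_zero hw
  refine ⟨algebraMap K[X] (RatFunc K) (Polynomial.C (-((j : K) + 1)⁻¹) * (u * t)) /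
      algebraMap K[X] (RatFunc K) (p ^ (j + 1)),
    u * s + Polynomial.C ((j : K) + 1)⁻¹ * derivative (u * t) * w, ?_⟩
  rw [Derivation.ratFunc_algebraMap_div hδ]
  have hst' := congrArg (algebraMap K[X] (RatFunc K)) hst
  simp only [derivative_mul, derivative_C, derivative_pow, Nat.add_sub_cancel, map_zero, map_add,
    map_sub, map_mul, map_pow, map_one, map_natCast, algebraMap_C, map_neg, map_inv₀] at hst' ⊢
  field_simp
  push_cast
  linear_combination (-((j + 1) * algebraMap K[X] (RatFunc K) u *
    algebraMap K[X] (RatFunc K) p ^ (2 * j + 2))) * hst'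

theorem RatFunc.exists_eq_derivation_add_div_squarefree (u v : K[X]) (hv : v ≠ 0) :
    ∃ g a b, Squarefree b ∧ algebraMap K[X] (RatFunc K) u / algebraMap K[X] (RatFunc K) v =
      δ g + algebraMap K[X] (RatFunc K) a / algebraMap K[X] (RatFunc K) b := by
  by_cases hsq : Squarefree v
  · exact ⟨0, u, v, hsq, by rw [map_zero, zero_add]⟩
  obtain ⟨p, j, w, hp, hpw, rfl⟩ := exists_eq_irreducible_pow_mul_of_not_squarefree hv hsq
  have hw : w ≠ 0 := by rintro rfl; exact hpw (dvd_zero p)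
  obtain ⟨g, u', hg⟩ := exists_div_irreducible_pow_mul_eq_derivation_add hδ hp hpw j u
  obtain ⟨g', a, b, hb, hg'⟩ := exists_eq_derivation_add_div_squarefree u' (p ^ (j + 1) * w)
    (mul_ne_zero (pow_ne_zero _ hp.ne_zero) hw)
  exact ⟨g + g', a, b, hb, by rw [hg, hg', map_add, add_assoc]⟩
termination_by v.natDegree
decreasing_by
  subst_vars
  rw [natDegree_mul (pow_ne_zero _ hp.ne_zero) hw, natDegree_mul (pow_ne_zero _ hp.ne_zero) hw,
    natDegree_pow, natDegree_pow]
  have := hp.natDegree_pos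
  nlinarith

theorem RatFunc.exists_eq_derivation_iff_forall_residue_eq_zero {L : Type*} [Field L]
    [IsAlgClosed L] {φ : K →+* L} {ι : RatFunc K →+* RatFunc L}
    (hι : ∀ q, ι (algebraMap K[X] (RatFunc K) q) = algebraMap L[X] (RatFunc L) (q.map φ))
    (f : RatFunc K) :
    (∃ g, f = δ g) ↔ ∀ γ : L, residue γ (ι f) = 0 := by
  have hres : ∀ g γ, residue γ (ι (δ g)) = 0 := by
    intro g γ
    rw [← num_div_denom g, Derivation.ratFunc_algebraMap_div hδ, map_div₀, hι, hι,
      Polynomial.map_sub, Polynomial.map_mul, Polynomial.map_mul, Polynomial.map_pow,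
      ← derivative_map, ← derivative_map]
    exact residue_quotientRule_eq_zero γ _ _
  refine ⟨fun ⟨g, hg⟩ ↦ hg ▸ hres g, fun h ↦ ?_⟩
  obtain ⟨g, a, b, hb, hf⟩ :=
    exists_eq_derivation_add_div_squarefree hδ f.num f.denom f.denom_ne_zero
  rw [num_div_denom] at hf
  have hba : b.map φ ∣ a.map φ := by
    refine dvd_of_forall_residue_eq_zero
      (PerfectField.separable_iff_squarefree.mpr hb).map.squarefree fun γ ↦ ?_
    simpa [hf, hres, hι] using h γ
  obtain ⟨t, rfl⟩ := (map_dvd_map' φ).mp hba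
  obtain ⟨T, hT⟩ := exists_derivative_eq t
  refine ⟨g + algebraMap K[X] (RatFunc K) T, ?_⟩
  rw [hf, map_add, hδ, hT, map_mul, mul_div_cancel_left₀ _ (algebraMap_ne_zero hb.ne_zero)]

end Derivation

/-- Proposition 2.2: a rational function `f ∈ K(x)` (`K` of characteristic zero) is the
derivative of a rational function in `K(x)` if and only if all its residues at its poles in
the algebraic closure of `K` vanish.  The residues are read off from the partial fraction
decomposition `ι f = p + ∑_i ∑_{j} α_{i,j}/(x-β_i)^{j+1}` over the algebraic closure,
where `ι : K(x) → K̄(x)` is the canonical inclusion (characterized on `C` and `X`);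
the residue of `f` at `β_i` is `α_{i,0}`.  `δ` is the derivation `d/dx` of `K(x)`,
characterized by killing constants and sending `x` to `1`. -/
theorem stmt0 {K : Type*} [Field K] [CharZero K]
    (f : RatFunc K)
    (ι : RatFunc K →+* RatFunc (AlgebraicClosure K))
    (hιC : ∀ a : K, ι (RatFunc.C a) = RatFunc.C (algebraMap K (AlgebraicClosure K) a))
    (hιX : ι RatFunc.X = RatFunc.X)
    -- partial fraction decomposition of `f` over the algebraic closure
    (p : Polynomial (AlgebraicClosure K)) (m : ℕ)
    (n : Fin m → ℕ) (α : Fin m → ℕ → AlgebraicClosure K)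
    (β : Fin m → AlgebraicClosure K) (hβ : Function.Injective β)
    (hdecomp : ι f =
      algebraMap (Polynomial (AlgebraicClosure K)) (RatFunc (AlgebraicClosure K)) p +
        ∑ i : Fin m, ∑ j ∈ Finset.range (n i),
          RatFunc.C (α i j) / (RatFunc.X - RatFunc.C (β i)) ^ (j + 1))
    -- the derivation `d/dx` on `K(x)`
    (δ : Derivation ℤ (RatFunc K) (RatFunc K))
    (hδC : ∀ a : K, δ (RatFunc.C a) = 0)
    (hδX : δ RatFunc.X = 1) :
    (∃ g : RatFunc K, f = δ g) ↔ ∀ i : Fin m, 0 < n i → α i 0 = 0 := by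
  classical
  rw [RatFunc.exists_eq_derivation_iff_forall_residue_eq_zero
    (Derivation.ratFunc_algebraMap δ hδC hδX) (RatFunc.ringHom_algebraMap_eq_map hιC hιX), hdecomp]
  simp only [map_add, RatFunc.residue_algebraMap, zero_add,
    RatFunc.residue_sum_sum_C_div_X_sub_C_pow]
  refine ⟨fun h i hi ↦ ?_, fun h γ ↦ Finset.sum_eq_zero fun i _ ↦ ?_⟩
  · simpa [hβ.eq_iff, ite_and, hi] using h (β i)
  · split_ifs with hi
    exacts [h i hi.2, rfl]
end

section
/- Let q be an element of K that is not a root of unity, β ≠ 0, and f = Σ_{ℓ=0}^{d} α_ℓ/(x - q^ℓ β)^s with α_ℓ, β algebraic over K. Then f is rational q-summable (f(x) = g(qx) - g(x) for some rational function g over \bar{K}) if and only if Σ_{ℓ=0}^{d} q^{-ℓs} α_ℓ = 0. -/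
/-!
Let `D_c(h)` be the coefficient of `(X - c)⁻ˢ` in the Laurent expansion of `h` at `c`. Expanding
`τ h = h(qX)` at `c` is expanding `h` at `q c` and substituting `X ↦ q X`, so
`D_c(τ h) = q⁻ˢ D_{qc}(h)`. Hence the orbital residue `∑_{ℓ ∈ ℤ} q^{-ℓs} D_{q^ℓ β}(h)`, a finite
sum because only poles of `h` contribute, is invariant under `τ` and vanishes on every `τ g - g`;
on `f` it equals `∑ q^{-ℓs} α_ℓ`. Conversely `τ` maps `(X - q^{ℓ+1} β)⁻ˢ` to `q⁻ˢ (X - q^ℓ β)⁻ˢ`,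
so modulo the image of `τ - 1` each `α_ℓ / (X - q^ℓ β)^s` is congruent to
`q^{-ℓs} α_ℓ / (X - β)^s`, and `f` to `(∑ q^{-ℓs} α_ℓ) / (X - β)^s`.
-/

open scoped Polynomial

lemma injective_zpow_mul {L : Type*} [Field L] {q : L} (hq0 : q ≠ 0)
    (hq : ∀ n : ℕ, 0 < n → q ^ n ≠ 1) {β : L} (hβ : β ≠ 0) :
    Function.Injective fun ℓ : ℤ => q ^ ℓ * β := by
  have hfin : ¬IsOfFinOrder (Units.mk0 q hq0) := by
    rw [← Units.isOfFinOrder_val, isOfFinOrder_iff_pow_eq_one]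
    rintro ⟨n, hn, hqn⟩
    exact hq n hn hqn
  intro a b hab
  refine injective_zpow_iff_not_isOfFinOrder.mpr hfin (Units.ext ?_)
  simpa using mul_right_cancel₀ hβ hab

namespace LaurentSeries

variable {R : Type*} [CommRing R]

def rescale (q : Rˣ) : LaurentSeries R →+* LaurentSeries R where
  toFun x :=
    { coeff := fun k => ↑(q ^ k) * x.coeff k
      isPWO_support' := x.isPWO_support.mono fun _ hk h => hk (by simp [h]) }
  map_one' := by
    ext k
    by_cases hk : k = 0 <;> simp [HahnSeries.coeff_one, hk]
  map_zero' := by ext; simp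
  map_add' x y := by ext; simp [mul_add]
  map_mul' x y := by
    ext a
    simp only [HahnSeries.coeff_mul, Finset.mul_sum]
    refine Finset.sum_congr ?_ fun ij hij => ?_
    · ext ij
      simp [HahnSeries.mem_support]
    · rw [← (Finset.mem_antidiagonal.mp hij).2.2, zpow_add, Units.val_mul]
      ring

@[simp]
lemma coeff_rescale (q : Rˣ) (x : LaurentSeries R) (k : ℤ) :
    (rescale q x).coeff k = ↑(q ^ k) * x.coeff k := rfl

lemma rescale_single (q : Rˣ) (k : ℤ) (r : R) :
    rescale q (HahnSeries.single k r) = HahnSeries.single k (↑(q ^ k) * r) := by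
  ext n
  by_cases hn : n = k <;> simp [hn]

lemma rescale_C (q : Rˣ) (r : R) : rescale q (HahnSeries.C r) = HahnSeries.C r := by
  simp [HahnSeries.C_apply, rescale_single]

end LaurentSeries

namespace RatFunc

variable {L : Type*} [Field L]

lemma ringHom_ext {A : Type*} [Semiring A] {F G : RatFunc L →+* A}
    (hC : ∀ a : L, F (C a) = G (C a)) (hX : F X = G X) : F = G :=
  IsLocalization.ringHom_ext (nonZeroDivisors L[X]) <| Polynomial.ringHom_ext
    (by simpa [algebraMap_C] using hC) (by simpa [algebraMap_X] using hX)

-- `laurent c` is the substitution `X ↦ X + c`, so this is the expansion in powers of `X - c`.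
noncomputable def expandAt (c : L) : RatFunc L →+* LaurentSeries L :=
  (algebraMap (RatFunc L) (LaurentSeries L)).comp (laurent c).toRingHom

lemma expandAt_C (c a : L) : expandAt c (C a) = HahnSeries.C a := by
  rw [expandAt, RingHom.comp_apply, AlgHom.toRingHom_eq_coe, AlgHom.coe_toRingHom, laurent_C,
    ← algebraMap_C, ← IsScalarTower.algebraMap_apply]
  simp

lemma expandAt_X (c : L) : expandAt c X = HahnSeries.single 1 1 + HahnSeries.C c := by
  rw [expandAt, RingHom.comp_apply, AlgHom.toRingHom_eq_coe, AlgHom.coe_toRingHom, laurent_X,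
    map_add, coe_X, ← algebraMap_C, ← IsScalarTower.algebraMap_apply]
  simp

lemma expandAt_comp_qShift {q : L} (hq0 : q ≠ 0) {τ : RatFunc L →+* RatFunc L}
    (hτC : ∀ a : L, τ (C a) = C a) (hτX : τ X = C q * X) (c : L) :
    (expandAt c).comp τ = (LaurentSeries.rescale (Units.mk0 q hq0)).comp (expandAt (q * c)) := by
  refine ringHom_ext (fun a => ?_) ?_
  · rw [RingHom.comp_apply, RingHom.comp_apply, hτC, expandAt_C, expandAt_C,
      LaurentSeries.rescale_C]
  · simp [hτX, expandAt_C, expandAt_X, LaurentSeries.rescale_single,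
      mul_add, HahnSeries.C_apply, HahnSeries.single_mul_single]

noncomputable def polarCoeff (s : ℕ) (c : L) : RatFunc L →+ L :=
  (HahnSeries.coeff.addMonoidHom (-(s : ℤ))).comp (expandAt c).toAddMonoidHom

lemma polarCoeff_apply (s : ℕ) (c : L) (h : RatFunc L) :
    polarCoeff s c h = (expandAt c h).coeff (-(s : ℤ)) := rfl

lemma polarCoeff_qShift {q : L} (hq0 : q ≠ 0) {τ : RatFunc L →+* RatFunc L}
    (hτC : ∀ a : L, τ (C a) = C a) (hτX : τ X = C q * X) (s : ℕ) (c : L) (h : RatFunc L) :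
    polarCoeff s c (τ h) = (q ^ s)⁻¹ * polarCoeff s (q * c) h := by
  rw [polarCoeff_apply, ← RingHom.comp_apply, expandAt_comp_qShift hq0 hτC hτX,
    RingHom.comp_apply, LaurentSeries.coeff_rescale, polarCoeff_apply]
  simp

lemma polarCoeff_div_eq_zero {s : ℕ} (hs : 1 ≤ s) {c : L} {p₁ p₂ : L[X]} (hp : p₂.eval c ≠ 0) :
    polarCoeff s c (algebraMap L[X] (RatFunc L) p₁ / algebraMap L[X] (RatFunc L) p₂) = 0 := by
  set P₁ : PowerSeries L := ↑(Polynomial.taylor c p₁)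
  set P₂ : PowerSeries L := ↑(Polynomial.taylor c p₂)
  have hP₂ : PowerSeries.constantCoeff P₂ ≠ 0 := by
    rwa [← PowerSeries.coeff_zero_eq_constantCoeff_apply, Polynomial.coeff_coe,
      Polynomial.taylor_coeff_zero]
  have hexpand : expandAt c (algebraMap L[X] (RatFunc L) p₁ / algebraMap L[X] (RatFunc L) p₂) =
      HahnSeries.ofPowerSeries ℤ L (P₁ * P₂⁻¹) := by
    rw [expandAt, RingHom.comp_apply, AlgHom.toRingHom_eq_coe, AlgHom.coe_toRingHom, laurent_div,
      algebraMap_apply_div, Polynomial.algebraMap_hahnSeries_apply,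
      Polynomial.algebraMap_hahnSeries_apply, div_eq_iff, map_mul, mul_assoc, ← map_mul,
      PowerSeries.inv_mul_cancel _ hP₂, map_one, mul_one]
    exact (map_ne_zero_iff _ HahnSeries.ofPowerSeries_injective).mpr
      fun h : P₂ = 0 => hP₂ (by rw [h, map_zero])
  rw [polarCoeff_apply, hexpand, PowerSeries.coeff_coe, if_pos (by omega)]

lemma polarCoeff_C_div_X_sub_C_pow_self (s : ℕ) (c a : L) :
    polarCoeff s c (C a / (X - C c) ^ s) = a := by
  rw [polarCoeff_apply, map_div₀, map_pow, map_sub, expandAt_C, expandAt_X, expandAt_C,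
    add_sub_cancel_right, HahnSeries.single_pow, one_pow, div_eq_mul_inv, HahnSeries.inv_single,
    inv_one, HahnSeries.C_apply, HahnSeries.single_mul_single]
  simp

lemma polarCoeff_C_div_X_sub_C_pow_of_ne {s : ℕ} (hs : 1 ≤ s) {c u : L} (huc : u ≠ c) (a : L) :
    polarCoeff s c (C a / (X - C u) ^ s) = 0 := by
  rw [← algebraMap_C, ← algebraMap_X, ← algebraMap_C, ← map_sub, ← map_pow]
  refine polarCoeff_div_eq_zero hs ?_
  rw [Polynomial.eval_pow, Polynomial.eval_sub, Polynomial.eval_X, Polynomial.eval_C]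
  exact pow_ne_zero _ (sub_ne_zero.mpr huc.symm)

lemma finite_setOf_polarCoeff_ne_zero {s : ℕ} (hs : 1 ≤ s) (h : RatFunc L) :
    {c | polarCoeff s c h ≠ 0}.Finite :=
  (Polynomial.finite_setOfPred_isRoot (denom_ne_zero h)).subset fun c hc => by
    by_contra hroot
    rw [← num_div_denom h] at hc
    exact hc (polarCoeff_div_eq_zero hs hroot)

noncomputable def orbitalResidue (q β : L) (s : ℕ) (h : RatFunc L) : L :=
  ∑ᶠ ℓ : ℤ, q⁻¹ ^ (ℓ * s) * polarCoeff s (q ^ ℓ * β) h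

lemma orbitalResidue_qShift {q : L} (hq0 : q ≠ 0) {τ : RatFunc L →+* RatFunc L}
    (hτC : ∀ a : L, τ (C a) = C a) (hτX : τ X = C q * X) (β : L) (s : ℕ) (h : RatFunc L) :
    orbitalResidue q β s (τ h) = orbitalResidue q β s h := by
  rw [orbitalResidue, orbitalResidue, ← finsum_comp_equiv (Equiv.addRight 1)
    (f := fun ℓ : ℤ => q⁻¹ ^ (ℓ * s) * polarCoeff s (q ^ ℓ * β) h)]
  refine finsum_congr fun ℓ => ?_
  rw [polarCoeff_qShift hq0 hτC hτX, Equiv.coe_addRight, add_mul, one_mul,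
    zpow_add₀ (inv_ne_zero hq0), zpow_add_one₀ hq0, zpow_natCast, inv_pow]
  ring_nf

lemma hasFiniteSupport_orbitalResidue_summand {q β : L}
    (horbit : Function.Injective fun ℓ : ℤ => q ^ ℓ * β) {s : ℕ} (hs : 1 ≤ s) (h : RatFunc L) :
    Function.HasFiniteSupport fun ℓ : ℤ => q⁻¹ ^ (ℓ * s) * polarCoeff s (q ^ ℓ * β) h :=
  ((finite_setOf_polarCoeff_ne_zero hs h).preimage horbit.injOn).subset
    fun _ hℓ => right_ne_zero_of_mul hℓ

lemma orbitalResidue_add {q β : L} (horbit : Function.Injective fun ℓ : ℤ => q ^ ℓ * β)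
    {s : ℕ} (hs : 1 ≤ s) (h₁ h₂ : RatFunc L) :
    orbitalResidue q β s (h₁ + h₂) = orbitalResidue q β s h₁ + orbitalResidue q β s h₂ := by
  simp only [orbitalResidue, map_add, mul_add]
  exact finsum_add_distrib (hasFiniteSupport_orbitalResidue_summand horbit hs h₁)
    (hasFiniteSupport_orbitalResidue_summand horbit hs h₂)

lemma orbitalResidue_C_div_X_sub_C_pow {q β : L}
    (horbit : Function.Injective fun ℓ : ℤ => q ^ ℓ * β) {s : ℕ} (hs : 1 ≤ s) (m : ℤ) (a : L) :
    orbitalResidue q β s (C a / (X - C (q ^ m * β)) ^ s) = q⁻¹ ^ (m * s) * a := by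
  rw [orbitalResidue, finsum_eq_single _ m fun ℓ hℓ => by
    rw [polarCoeff_C_div_X_sub_C_pow_of_ne hs (horbit.ne hℓ.symm), mul_zero],
    polarCoeff_C_div_X_sub_C_pow_self]

lemma qShift_C_div_X_sub_C_pow {q : L} (hq0 : q ≠ 0) {τ : RatFunc L →+* RatFunc L}
    (hτC : ∀ a : L, τ (C a) = C a) (hτX : τ X = C q * X) (s : ℕ) (b c : L) :
    τ (C b / (X - C (q * c)) ^ s) = C ((q ^ s)⁻¹ * b) / (X - C c) ^ s := by
  have hCq : C q ≠ 0 := by simpa using hq0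
  rw [map_div₀, map_pow, map_sub, hτC, hτX, hτC, map_mul C q c, ← mul_sub, mul_pow, map_mul,
    map_inv₀, map_pow]
  field_simp

lemma C_div_X_sub_C_pow_sub_mem_range {q : L} (hq0 : q ≠ 0) {τ : RatFunc L →+* RatFunc L}
    (hτC : ∀ a : L, τ (C a) = C a) (hτX : τ X = C q * X) (β : L) (s ℓ : ℕ) (a : L) :
    C a / (X - C (q ^ ℓ * β)) ^ s - C (q⁻¹ ^ (ℓ * s) * a) / (X - C β) ^ s ∈
      (τ.toAddMonoidHom - AddMonoidHom.id _).range := by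
  induction ℓ generalizing a with
  | zero => simp
  | succ ℓ ih =>
    set g := C a / (X - C (q ^ (ℓ + 1) * β)) ^ s
    have hτg : τ g = C ((q ^ s)⁻¹ * a) / (X - C (q ^ ℓ * β)) ^ s := by
      rw [← qShift_C_div_X_sub_C_pow hq0 hτC hτX, ← mul_assoc, ← pow_succ']
    have hweight : q⁻¹ ^ ((ℓ + 1) * s) * a = q⁻¹ ^ (ℓ * s) * ((q ^ s)⁻¹ * a) := by
      rw [add_mul, one_mul, pow_add, inv_pow]
      ring
    have hshift : τ g - g ∈ (τ.toAddMonoidHom - AddMonoidHom.id _).range :=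
      AddMonoidHom.mem_range.mpr ⟨g, rfl⟩
    rw [hweight]
    convert sub_mem (ih ((q ^ s)⁻¹ * a)) hshift using 1
    rw [hτg]
    abel

end RatFunc

theorem stmt3_general {L : Type*} [Field L]
    (q : L) (hq0 : q ≠ 0) (hq : ∀ n : ℕ, 0 < n → q ^ n ≠ 1)
    (d s : ℕ) (hs : 1 ≤ s) (α : ℕ → L) (β : L) (hβ : β ≠ 0)
    (f : RatFunc L)
    (hf : f = ∑ ℓ ∈ Finset.range (d + 1),
      RatFunc.C (α ℓ) / (RatFunc.X - RatFunc.C (q ^ ℓ * β)) ^ s)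
    (τ : RatFunc L →+* RatFunc L)
    (hτC : ∀ a : L, τ (RatFunc.C a) = RatFunc.C a)
    (hτX : τ RatFunc.X = RatFunc.C q * RatFunc.X) :
    (∃ g : RatFunc L, f = τ g - g) ↔
      ∑ ℓ ∈ Finset.range (d + 1), q⁻¹ ^ (ℓ * s) * α ℓ = 0 := by
  have horbit := injective_zpow_mul hq0 hq hβ
  let R : RatFunc L →+ L :=
    AddMonoidHom.mk' (RatFunc.orbitalResidue q β s) (RatFunc.orbitalResidue_add horbit hs)
  have hRf : R f = ∑ ℓ ∈ Finset.range (d + 1), q⁻¹ ^ (ℓ * s) * α ℓ := by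
    rw [hf, map_sum]
    refine Finset.sum_congr rfl fun ℓ _ => ?_
    have := RatFunc.orbitalResidue_C_div_X_sub_C_pow horbit hs ℓ (α ℓ)
    rwa [zpow_natCast, ← Nat.cast_mul, zpow_natCast] at this
  constructor
  · rintro ⟨g, rfl⟩
    rw [← hRf, map_sub]
    exact sub_eq_zero.mpr (RatFunc.orbitalResidue_qShift hq0 hτC hτX β s g)
  · intro hsum
    have hmem : f - RatFunc.C (∑ ℓ ∈ Finset.range (d + 1), q⁻¹ ^ (ℓ * s) * α ℓ) /
        (RatFunc.X - RatFunc.C β) ^ s ∈ (τ.toAddMonoidHom - AddMonoidHom.id _).range := by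
      rw [hf, map_sum, Finset.sum_div, ← Finset.sum_sub_distrib]
      exact sum_mem fun ℓ _ => RatFunc.C_div_X_sub_C_pow_sub_mem_range hq0 hτC hτX β s ℓ (α ℓ)
    rw [hsum, map_zero, zero_div, sub_zero] at hmem
    obtain ⟨g, hg⟩ := AddMonoidHom.mem_range.mp hmem
    exact ⟨g, hg.symm⟩

/-- Lemma 2.9: let `q` be nonzero and not a root of unity, `β ≠ 0`, and
`f = ∑_{ℓ=0}^d α_ℓ/(x - q^ℓ β)^s` over an algebraically closed field `L` of characteristic
zero (playing the role of the algebraic closure of `K`).  Then `f` is rational `q`-summable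
(i.e. `f = g(qx) - g(x)` for some rational function `g`) if and only if
`∑_{ℓ=0}^d q^{-ℓ s} α_ℓ = 0`.  Here `τ` is the `q`-shift automorphism of `L(x)`,
characterized by fixing constants and sending `x` to `q x`. -/
theorem stmt3 {L : Type*} [Field L] [CharZero L] [IsAlgClosed L]
    (q : L) (hq0 : q ≠ 0) (hq : ∀ n : ℕ, 0 < n → q ^ n ≠ 1)
    (d s : ℕ) (hs : 1 ≤ s) (α : ℕ → L) (β : L) (hβ : β ≠ 0)
    (f : RatFunc L)
    (hf : f = ∑ ℓ ∈ Finset.range (d + 1),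
      RatFunc.C (α ℓ) / (RatFunc.X - RatFunc.C (q ^ ℓ * β)) ^ s)
    (τ : RatFunc L →+* RatFunc L)
    (hτC : ∀ a : L, τ (RatFunc.C a) = RatFunc.C a)
    (hτX : τ RatFunc.X = RatFunc.C q * RatFunc.X) :
    (∃ g : RatFunc L, f = τ g - g) ↔
      ∑ ℓ ∈ Finset.range (d + 1), q⁻¹ ^ (ℓ * s) * α ℓ = 0 :=
  stmt3_general q hq0 hq d s hs α β hβ f hf τ hτC hτX
end

section
/- Let k be algebraically closed of characteristic zero, q ∈ k not a root of unity. If α in the algebraic closure of k(t) satisfies Q_t^n(α) - α = m for some nonzero integer n and integer m, then m = 0 and α ∈ k. -/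
/-!
Choose `N > 0` with `σ^N α = α + M`, `M = ±m`. On `k(t)` the automorphism `σ^N` is the
rescaling `τ : t ↦ s t` with `s = q^N` not a root of unity. If `P` is the minimal polynomial
of `α` over `k(t)`, both `P^τ` and `P(X - M)` are the minimal polynomial of `σ^N α = α + M`,
so comparing their coefficients of `X^(d-1)` gives `τ b = b - d M` for a `b ∈ k(t)`.
Writing `c = f / g` in lowest terms, `τ c = c + a` with `a ∈ k` forces `g ∣ g(sX)`, hence
`g(sX) = s^v g` and `g = t^v`; comparing coefficients then gives `a = 0` and `f = f_v t^v`.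
So `M = 0`, `P^τ = P`, all coefficients of `P` are constants, and `α ∈ k` since `k` is
algebraically closed.
-/

open Polynomial

theorem pow_injective_of_pow_ne_one {M₀ : Type*} [MonoidWithZero M₀] [IsLeftCancelMulZero M₀]
    {s : M₀} (hs0 : s ≠ 0) (hs : ∀ n : ℕ, 0 < n → s ^ n ≠ 1) :
    Function.Injective (s ^ · : ℕ → M₀) := by
  have hlt : ∀ i j : ℕ, i < j → s ^ i ≠ s ^ j := fun i j hij hpow =>
    hs (j - i) (by omega) (mul_left_cancel₀ (pow_ne_zero i hs0) (by
      rw [← pow_add, Nat.add_sub_cancel' hij.le, mul_one, hpow]))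
  intro i j hij
  rcases lt_trichotomy i j with h | h | h
  exacts [absurd hij (hlt i j h), h, absurd hij.symm (hlt j i h)]

theorem RingAut.exists_pow_apply_eq_add_of_zpow_apply_sub_eq {L : Type*} [CommRing L]
    (σ : RingAut L) {α : L} {n : ℤ} (hn : n ≠ 0) {m : ℤ} (h : (σ ^ n) α - α = m) :
    ∃ N : ℕ, N ≠ 0 ∧ ∃ M : ℤ, M.natAbs = m.natAbs ∧ (σ ^ N) α = α + M := by
  refine ⟨n.natAbs, Int.natAbs_ne_zero.mpr hn, ?_⟩
  rcases Int.natAbs_eq n with hn' | hn'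
  · rw [hn', zpow_natCast] at h
    exact ⟨m, rfl, by linear_combination h⟩
  · rw [hn', zpow_neg, zpow_natCast] at h
    have := congrArg (σ ^ n.natAbs) h
    rw [map_sub, map_intCast, RingAut.inv_apply, RingEquiv.apply_symm_apply] at this
    exact ⟨-m, Int.natAbs_neg m, by push_cast; linear_combination -this⟩

namespace Polynomial

theorem coeff_taylor_natDegree_sub_one {R : Type*} [CommSemiring R] (p : R[X]) (r : R) :
    (taylor r p).coeff (p.natDegree - 1)
      = p.coeff (p.natDegree - 1) + p.natDegree * p.leadingCoeff * r := by
  rw [taylor_coeff, eq_X_add_C_of_natDegree_le_one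
    ((natDegree_hasseDeriv_le p _).trans (by omega))]
  rcases Nat.eq_zero_or_pos p.natDegree with h | h
  · simp only [eval_add, eval_mul, eval_C, eval_X, hasseDeriv_coeff, h]
    simp [coeff_eq_zero_of_natDegree_lt, h]
  · simp only [eval_add, eval_mul, eval_C, eval_X, hasseDeriv_coeff]
    obtain ⟨d, hd⟩ : ∃ d, p.natDegree = d + 1 := ⟨_, (Nat.succ_pred_eq_of_pos h).symm⟩
    rw [leadingCoeff, hd, Nat.add_sub_cancel, add_comm 1 d, Nat.choose_succ_self_right]
    simp
    ring

section Domain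

variable {R : Type*} [CommRing R] [IsDomain R] {s : R} {p : R[X]}

theorem eq_C_mul_X_pow_of_comp_C_mul_X_eq (hs : Function.Injective (s ^ · : ℕ → R)) {v : ℕ}
    (h : p.comp (C s * X) = C (s ^ v) * p) : p = C (p.coeff v) * X ^ v := by
  ext i
  have hi := congrArg (coeff · i) h
  simp only [comp_C_mul_X_coeff, coeff_C_mul] at hi
  rcases eq_or_ne i v with rfl | hiv
  · simp
  · rw [coeff_C_mul_X_pow, if_neg hiv]
    by_contra hp
    exact hiv (hs (mul_left_cancel₀ hp (hi.trans (mul_comm _ _))))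

theorem comp_C_mul_X_eq_C_pow_mul_of_dvd (hs : s ≠ 0) (h : p ∣ p.comp (C s * X)) :
    p.comp (C s * X) = C (s ^ p.natDegree) * p := by
  rcases eq_or_ne p 0 with rfl | hp
  · simp
  obtain ⟨r, hr⟩ := h
  have hr0 : r ≠ 0 := by
    rintro rfl
    rw [mul_zero, comp_C_mul_X_eq_zero_iff (mem_nonZeroDivisors_of_ne_zero hs)] at hr
    exact hp hr
  have hdeg : r.natDegree = 0 := by
    have := congrArg natDegree hr
    rw [natDegree_comp, natDegree_C_mul_X s hs, natDegree_mul hp hr0] at this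
    omega
  obtain ⟨u, rfl⟩ := natDegree_eq_zero.mp hdeg
  rw [hr, mul_comm]
  congr 2
  have := congrArg (coeff · p.natDegree) hr
  simp only [comp_C_mul_X_coeff, coeff_mul_C] at this
  exact (mul_left_cancel₀ (leadingCoeff_ne_zero.mpr hp) this).symm

theorem aeval_C_mul_X_injective (hs : s ≠ 0) :
    Function.Injective (aeval (C s * X) : R[X] →ₐ[R] R[X]) := by
  refine (injective_iff_map_eq_zero _).mpr fun p hp => ?_
  rwa [← comp_eq_aeval, comp_C_mul_X_eq_zero_iff (mem_nonZeroDivisors_of_ne_zero hs)] at hp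

end Domain

end Polynomial

theorem minpoly.map_eq_comp_X_sub_C_of_apply_eq_add {F L : Type*} [Field F] [Field L]
    [Algebra F L] {τ : F →+* F} {ρ : L →+* L}
    (hρ : ρ.comp (algebraMap F L) = (algebraMap F L).comp τ)
    {α : L} (hα : IsIntegral F α) {b : F} (h : ρ α = α + algebraMap F L b) :
    (minpoly F α).map τ = (minpoly F α).comp (X - C b) := by
  rw [← minpoly.add_algebraMap]
  refine eq_of_monic_of_dvd_of_natDegree_le (minpoly.monic (hα.add isIntegral_algebraMap))
    ((minpoly.monic hα).map τ) (minpoly.dvd F _ ?_) ?_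
  · rw [← h, aeval_def, eval₂_map, ← hρ, ← hom_eval₂, ← aeval_def, minpoly.aeval, map_zero]
  · rw [minpoly.add_algebraMap, natDegree_comp, natDegree_X_sub_C, mul_one,
      (minpoly.monic hα).natDegree_map]

theorem IsAlgClosed.exists_eq_of_minpoly_coeff_mem_range {k F L : Type*} [Field k]
    [IsAlgClosed k] [Field F] [Field L] [Algebra F L] (φ : k →+* F) {α : L}
    (hα : IsIntegral F α) (h : ∀ i, (minpoly F α).coeff i ∈ φ.range) :
    ∃ c : k, α = algebraMap F L (φ c) := by
  obtain ⟨Q, hQ⟩ := (mem_lifts _).mp ((lifts_iff_coeff_lifts _).mpr h)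
  have hQ0 : Q ≠ 0 := by
    rintro rfl
    exact minpoly.ne_zero hα (by rw [← hQ, Polynomial.map_zero])
  obtain ⟨c, hc⟩ := (IsAlgClosed.splits Q).mem_range_of_isRoot hQ0
    (i := (algebraMap F L).comp φ) (by
      rw [IsRoot, ← map_map, hQ, eval_map_algebraMap, minpoly.aeval])
  exact ⟨c, hc.symm⟩

namespace RatFunc

section Rescale

variable {k : Type*} [Field k] {s : k}

noncomputable def rescale (s : k) (hs : s ≠ 0) : RatFunc k →ₐ[k] RatFunc k :=
  mapAlgHom (aeval (Polynomial.C s * Polynomial.X))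
    (nonZeroDivisors_le_comap_nonZeroDivisors_of_injective _ (aeval_C_mul_X_injective hs))

theorem rescale_div_algebraMap (hs : s ≠ 0) (p q : k[X]) :
    rescale s hs (algebraMap _ _ p / algebraMap _ _ q)
      = algebraMap _ _ (p.comp (.C s * .X)) / algebraMap _ _ (q.comp (.C s * .X)) := by
  rw [rescale, coe_mapAlgHom_eq_coe_map, map_apply_div, comp_eq_aeval, comp_eq_aeval]

theorem rescale_algebraMap (hs : s ≠ 0) (p : k[X]) :
    rescale s hs (algebraMap _ _ p) = algebraMap _ _ (p.comp (.C s * .X)) := by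
  simpa using rescale_div_algebraMap hs p 1

theorem rescale_C (hs : s ≠ 0) (a : k) : rescale s hs (C a) = C a := by
  rw [← algebraMap_eq_C, AlgHom.commutes]

theorem rescale_X (hs : s ≠ 0) : rescale s hs X = C s * X := by
  rw [← algebraMap_X, rescale_algebraMap, X_comp, map_mul, algebraMap_C, algebraMap_X]

theorem eq_zero_and_eq_C_of_rescale_eq_add_C (hs0 : s ≠ 0)
    (hs : Function.Injective (s ^ · : ℕ → k)) {c : RatFunc k} {a : k}
    (h : rescale s hs0 c = c + C a) : a = 0 ∧ ∃ e, c = C e := by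
  set f := c.num
  set g := c.denom
  set v := g.natDegree
  have hc : c = algebraMap _ _ f / algebraMap _ _ g := c.num_div_denom.symm
  have hcross : f.comp (.C s * .X) * g = (f + .C a * g) * g.comp (.C s * .X) := by
    have hg := algebraMap_ne_zero c.denom_ne_zero
    have hgs := algebraMap_ne_zero <|
      (comp_C_mul_X_eq_zero_iff (mem_nonZeroDivisors_of_ne_zero hs0)).not.mpr c.denom_ne_zero
    rw [hc, rescale_div_algebraMap, ← algebraMap_C, div_add' _ _ _ hg,
      div_eq_div_iff hgs hg] at h
    apply algebraMap_injective k
    simpa using h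
  have hg : g.comp (.C s * .X) = .C (s ^ v) * g :=
    comp_C_mul_X_eq_C_pow_mul_of_dvd hs0 <|
      (c.isCoprime_num_denom.add_mul_right_left _).symm.dvd_of_dvd_mul_left
        ⟨_, hcross.symm.trans (mul_comm _ _)⟩
  have hgX : g = .X ^ v := by
    have := eq_C_mul_X_pow_of_comp_C_mul_X_eq hs hg
    rwa [c.monic_denom.coeff_natDegree, map_one, one_mul] at this
  have hXv : (.X ^ v : k[X]) ≠ 0 := pow_ne_zero v Polynomial.X_ne_zero
  have hf : f.comp (.C s * .X) = .C (s ^ v) * f + .C (s ^ v * a) * .X ^ v := by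
    rw [hg, hgX] at hcross
    refine mul_right_cancel₀ hXv ?_
    rw [hcross, map_mul]
    ring
  have ha : a = 0 := by
    have := congrArg (coeff · v) hf
    simp only [comp_C_mul_X_coeff, coeff_add, coeff_C_mul, coeff_X_pow_self, mul_one] at this
    have : s ^ v * a = 0 := by linear_combination -this
    simpa [hs0] using this
  subst ha
  have hfX := eq_C_mul_X_pow_of_comp_C_mul_X_eq hs (by simpa using hf)
  refine ⟨rfl, f.coeff v, ?_⟩
  rw [hc, hfX, hgX, map_mul, mul_div_cancel_right₀ _ (algebraMap_ne_zero hXv), algebraMap_C,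
    coeff_C_mul_X_pow, if_pos rfl]

end Rescale

section Extension

variable {k L : Type*} [Field k] [Field L] [Algebra (RatFunc k) L]

theorem comp_algebraMap_eq_algebraMap_comp_rescale {s : k} (hs : s ≠ 0) {ρ : L →+* L}
    (hC : ∀ a : k, ρ (algebraMap (RatFunc k) L (C a)) = algebraMap (RatFunc k) L (C a))
    (hX : ρ (algebraMap (RatFunc k) L X)
      = algebraMap (RatFunc k) L (C s) * algebraMap (RatFunc k) L X) :
    ρ.comp (algebraMap (RatFunc k) L) = (algebraMap (RatFunc k) L).comp (rescale s hs) := by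
  refine IsLocalization.ringHom_ext (nonZeroDivisors k[X]) (Polynomial.ringHom_ext ?_ ?_)
  · intro a
    simp [hC, rescale_C]
  · simp [hX, rescale_X]

theorem pow_comp_algebraMap_eq_algebraMap_comp_rescale {q : k} (hq : q ≠ 0) (σ : RingAut L)
    (hC : ∀ a : k, σ (algebraMap (RatFunc k) L (C a)) = algebraMap (RatFunc k) L (C a))
    (hX : σ (algebraMap (RatFunc k) L X)
      = algebraMap (RatFunc k) L (C q) * algebraMap (RatFunc k) L X) (N : ℕ) :
    ((σ ^ N : RingAut L) : L →+* L).comp (algebraMap (RatFunc k) L)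
      = (algebraMap (RatFunc k) L).comp (rescale (q ^ N) (pow_ne_zero N hq)) := by
  have hCN : ∀ (j : ℕ) (a : k), (σ ^ j) (algebraMap (RatFunc k) L (C a))
      = algebraMap (RatFunc k) L (C a) := by
    intro j a
    induction j with
    | zero => rfl
    | succ j ih => rw [pow_succ', RingAut.mul_apply, ih, hC]
  have hXN : ∀ j : ℕ, (σ ^ j) (algebraMap (RatFunc k) L X)
      = algebraMap (RatFunc k) L (C (q ^ j)) * algebraMap (RatFunc k) L X := by
    intro j
    induction j with
    | zero => simp
    | succ j ih =>
      rw [pow_succ', RingAut.mul_apply, ih, map_mul, hC, hX, pow_succ', map_mul, map_mul]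
      ring
  exact comp_algebraMap_eq_algebraMap_comp_rescale _ (hCN N) (hXN N)

theorem eq_zero_and_eq_C_of_apply_eq_add_C [CharZero k] [IsAlgClosed k] {s : k} (hs0 : s ≠ 0)
    (hs : Function.Injective (s ^ · : ℕ → k)) {ρ : L →+* L}
    (hρ : ρ.comp (algebraMap (RatFunc k) L) = (algebraMap (RatFunc k) L).comp (rescale s hs0))
    {α : L} (hα : IsIntegral (RatFunc k) α) {a : k}
    (h : ρ α = α + algebraMap (RatFunc k) L (C a)) :
    a = 0 ∧ ∃ c : k, α = algebraMap (RatFunc k) L (C c) := by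
  set P := minpoly (RatFunc k) α
  have hmap := minpoly.map_eq_comp_X_sub_C_of_apply_eq_add hρ hα h
  have hsub : rescale s hs0 (P.coeff (P.natDegree - 1))
      = P.coeff (P.natDegree - 1) + C (-(P.natDegree * a)) := by
    have := congrArg (coeff · (P.natDegree - 1)) hmap
    rw [coeff_map, sub_eq_add_neg, ← Polynomial.C_neg, ← taylor_apply,
      coeff_taylor_natDegree_sub_one, (minpoly.monic hα).leadingCoeff] at this
    refine this.trans ?_
    rw [map_neg, map_mul, map_natCast]
    ring
  have hd : P.natDegree ≠ 0 := (minpoly.natDegree_pos hα).ne'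
  have ha : a = 0 := by
    simpa [hd] using (eq_zero_and_eq_C_of_rescale_eq_add_C hs0 hs hsub).1
  subst ha
  refine ⟨rfl, IsAlgClosed.exists_eq_of_minpoly_coeff_mem_range C hα fun i => ?_⟩
  have hfix : rescale s hs0 (P.coeff i) = P.coeff i + C 0 := by
    simpa using congrArg (coeff · i) hmap
  obtain ⟨e, he⟩ := (eq_zero_and_eq_C_of_rescale_eq_add_C hs0 hs hfix).2
  exact ⟨e, he.symm⟩

end Extension

end RatFunc

/-- Lemma 3.8: let `k` be algebraically closed of characteristic zero, `q ∈ k` not a root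
of unity, and `σ` an extension to the algebraic closure of `k(t)` of the `q`-shift
automorphism `t ↦ qt` of `k(t)`.  If `σ^n α - α = m` for some nonzero integer `n` and
integer `m`, then `m = 0` and `α ∈ k`. -/
theorem stmt14 {k : Type*} [Field k] [CharZero k] [IsAlgClosed k]
    (q : k) (hq0 : q ≠ 0) (hq : ∀ n : ℕ, 0 < n → q ^ n ≠ 1)
    (σ : RingAut (AlgebraicClosure (RatFunc k)))
    (hσk : ∀ a : k, σ (algebraMap (RatFunc k) (AlgebraicClosure (RatFunc k)) (RatFunc.C a))
      = algebraMap (RatFunc k) (AlgebraicClosure (RatFunc k)) (RatFunc.C a))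
    (hσt : σ (algebraMap (RatFunc k) (AlgebraicClosure (RatFunc k)) RatFunc.X)
      = algebraMap (RatFunc k) (AlgebraicClosure (RatFunc k)) (RatFunc.C q) *
        algebraMap (RatFunc k) (AlgebraicClosure (RatFunc k)) RatFunc.X)
    (α : AlgebraicClosure (RatFunc k)) (n : ℤ) (hn : n ≠ 0) (m : ℤ)
    (hα : (σ ^ n) α - α = (m : AlgebraicClosure (RatFunc k))) :
    m = 0 ∧ ∃ c : k,
      α = algebraMap (RatFunc k) (AlgebraicClosure (RatFunc k)) (RatFunc.C c) := by
  obtain ⟨N, hN, M, hMm, hM⟩ := σ.exists_pow_apply_eq_add_of_zpow_apply_sub_eq hn hα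
  have hs : Function.Injective ((q ^ N) ^ · : ℕ → k) :=
    pow_injective_of_pow_ne_one (pow_ne_zero N hq0) fun i hi => by
      rw [← pow_mul]
      exact hq _ (by positivity)
  obtain ⟨hM0, hc⟩ := RatFunc.eq_zero_and_eq_C_of_apply_eq_add_C (pow_ne_zero N hq0) hs
    (RatFunc.pow_comp_algebraMap_eq_algebraMap_comp_rescale hq0 σ hσk hσt N)
    (Algebra.IsIntegral.isIntegral α) (a := M) (by simpa using hM)
  rw [Int.cast_eq_zero] at hM0
  subst hM0
  exact ⟨by omega, hc⟩
end

section
/- Let k be algebraically closed of characteristic zero, q ∈ k not a root of unity. If α in the algebraic closure of k(t) satisfies Q_t^n(α) = q^m α for some nonzero integer n and integer m, then α = c t^{m/n} for some c ∈ k. -/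
/-!
Put `τ = σ ^ n` and `t = X`. Both `αⁿ` and `tᵐ` are multiplied by `q ^ (m * n)` under `τ`, so
`δ = αⁿ / tᵐ` is fixed by `τ`. On `k(t)`, `τ` is the dilation `f(t) ↦ f(λt)` with `λ = qⁿ` not a
root of unity, so it fixes the coefficients of the minimal polynomial of `δ`. A rational function
`P / Q` in lowest terms with `f(λt) = f(t)` is constant: `P` and `Q` are then eigenvectors of the
dilation with the same eigenvalue, hence monomials of the same degree. Thus `δ` is algebraic over
`k`, i.e. `δ = d ∈ k`, and `α = c β` with `cⁿ = d` and `βⁿ = tᵐ`.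
-/

open Polynomial

theorem minpoly_map_eq_self {K L : Type*} [Field K] [Field L] [Algebra K L] {s : K →+* K}
    {τ : L →+* L} (h : τ.comp (algebraMap K L) = (algebraMap K L).comp s) {x : L}
    (hx : IsIntegral K x) (hτx : τ x = x) : (minpoly K x).map s = minpoly K x := by
  have hroot : aeval x ((minpoly K x).map s) = 0 := by
    have := hom_eval₂ (minpoly K x) (algebraMap K L) τ x
    rw [hτx, ← aeval_def, minpoly.aeval, map_zero] at this
    rw [aeval_def, eval₂_map, ← h, this]
  exact (eq_of_dvd_of_natDegree_le_of_leadingCoeff (minpoly.dvd K x hroot) natDegree_map_le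
    ((minpoly.monic hx).trans ((minpoly.monic hx).map s).symm)).symm

theorem IsAlgClosed.mem_range_of_minpoly_mem_lifts {k K L : Type*} [Field k] [IsAlgClosed k]
    [Field K] [Field L] [Algebra K L] (i : k →+* K) {x : L} (hx : IsIntegral K x)
    (h : minpoly K x ∈ lifts i) : x ∈ ((algebraMap K L).comp i).range := by
  obtain ⟨p, hp⟩ := (mem_lifts _).mp h
  have hp0 : p ≠ 0 := by
    rintro rfl
    exact minpoly.ne_zero hx (by rw [← hp, Polynomial.map_zero])
  refine (IsAlgClosed.splits p).mem_range_of_isRoot hp0 ?_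
  rw [IsRoot, ← Polynomial.map_map, hp, eval_map, ← aeval_def, minpoly.aeval]

theorem IsAlgClosed.exists_zpow_eq {k : Type*} [Field k] [IsAlgClosed k] (x : k) {n : ℤ}
    (hn : n ≠ 0) : ∃ z, z ^ n = x := by
  obtain ⟨z, hz⟩ := IsAlgClosed.exists_pow_nat_eq x (Int.natAbs_pos.mpr hn)
  rcases Int.natAbs_eq n with h | h
  · exact ⟨z, by rw [h, zpow_natCast, hz]⟩
  · exact ⟨z⁻¹, by rw [h, zpow_neg, inv_zpow, inv_inv, zpow_natCast, hz]⟩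

theorem injective_zpow_pow_of_not_isOfFinOrder {k : Type*} [Field k] {q : k} (hq0 : q ≠ 0)
    (hq : ¬IsOfFinOrder q) {n : ℤ} (hn : n ≠ 0) : Function.Injective ((q ^ n) ^ · : ℕ → k) := by
  intro i j hij
  simp only [← zpow_natCast, ← zpow_mul] at hij
  have h1 : q ^ (n * i - n * j) = 1 := by
    rw [zpow_sub₀ hq0, hij, div_self (zpow_ne_zero _ hq0)]
  by_contra hne
  refine hq (isOfFinOrder_iff_zpow_eq_one.mpr ⟨_, ?_, h1⟩)
  rw [← mul_sub]
  exact mul_ne_zero hn (sub_ne_zero.mpr (by exact_mod_cast hne))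

namespace Polynomial

variable {k : Type*} [Field k] {r : k}

theorem eq_C_mul_X_pow_of_comp_C_mul_X_eq_s15 (hr : Function.Injective (r ^ · : ℕ → k))
    {p : k[X]} {c : k} (h : p.comp (C r * X) = C c * p) :
    p = C p.leadingCoeff * X ^ p.natDegree ∧ (p ≠ 0 → c = r ^ p.natDegree) := by
  have hcoeff : ∀ i, p.coeff i ≠ 0 → r ^ i = c := fun i hi => by
    have := congrArg (coeff · i) h
    simp only [comp_C_mul_X_coeff, coeff_C_mul] at this
    exact mul_left_cancel₀ hi (by rw [this, mul_comm])
  refine ⟨ext fun i => ?_, fun hp => (hcoeff _ (leadingCoeff_ne_zero.mpr hp)).symm⟩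
  rw [coeff_C_mul_X_pow]
  split_ifs with hi
  · rw [hi, coeff_natDegree]
  · by_contra hne
    have hp : p ≠ 0 := by rintro rfl; exact hne rfl
    exact hi (hr ((hcoeff i hne).trans (hcoeff _ (leadingCoeff_ne_zero.mpr hp)).symm))

theorem exists_comp_C_mul_X_eq_C_mul_of_isCoprime (hr : r ≠ 0) {p q : k[X]} (hpq : IsCoprime p q)
    (hp : p ≠ 0) (h : p.comp (C r * X) * q = p * q.comp (C r * X)) :
    ∃ c, p.comp (C r * X) = C c * p ∧ q.comp (C r * X) = C c * q := by
  obtain ⟨w, hw⟩ : p ∣ p.comp (C r * X) := hpq.dvd_of_dvd_mul_right ⟨_, h⟩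
  have hw0 : w ≠ 0 := by
    rintro rfl
    rw [mul_zero, comp_C_mul_X_eq_zero_iff (mem_nonZeroDivisors_of_ne_zero hr)] at hw
    exact hp hw
  have hdeg : w.natDegree = 0 := by
    have := congrArg natDegree hw
    rw [natDegree_comp, natDegree_C_mul_X r hr, mul_one, natDegree_mul hp hw0] at this
    omega
  rw [eq_C_of_natDegree_eq_zero hdeg, mul_comm p] at hw
  refine ⟨w.coeff 0, hw, mul_left_cancel₀ hp ?_⟩
  rw [← h, hw]
  ring

theorem exists_eq_C_mul_of_comp_C_mul_X_mul_eq (hr0 : r ≠ 0)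
    (hr : Function.Injective (r ^ · : ℕ → k)) {p q : k[X]} (hpq : IsCoprime p q) (hq : q ≠ 0)
    (h : p.comp (C r * X) * q = p * q.comp (C r * X)) : ∃ c, p = C c * q := by
  obtain rfl | hp := eq_or_ne p 0
  · exact ⟨0, by simp⟩
  obtain ⟨c, hpc, hqc⟩ := exists_comp_C_mul_X_eq_C_mul_of_isCoprime hr0 hpq hp h
  obtain ⟨hp_eq, hcp⟩ := eq_C_mul_X_pow_of_comp_C_mul_X_eq_s15 hr hpc
  obtain ⟨hq_eq, hcq⟩ := eq_C_mul_X_pow_of_comp_C_mul_X_eq_s15 hr hqc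
  have hdeg : p.natDegree = q.natDegree := hr ((hcp hp).symm.trans (hcq hq))
  refine ⟨p.leadingCoeff / q.leadingCoeff, ?_⟩
  calc p = C p.leadingCoeff * X ^ q.natDegree := hdeg ▸ hp_eq
    _ = C (p.leadingCoeff / q.leadingCoeff) * (C q.leadingCoeff * X ^ q.natDegree) := by
      rw [← mul_assoc, ← C_mul, div_mul_cancel₀ _ (leadingCoeff_ne_zero.mpr hq)]
    _ = C (p.leadingCoeff / q.leadingCoeff) * q := by rw [← hq_eq]

theorem compRingHom_C_mul_X_injective (hr : r ≠ 0) :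
    Function.Injective (compRingHom (C r * X) : k[X] →+* k[X]) :=
  (injective_iff_map_eq_zero _).mpr fun _ =>
    (comp_C_mul_X_eq_zero_iff (mem_nonZeroDivisors_of_ne_zero hr)).mp

end Polynomial

namespace RatFunc

variable {k : Type*} [Field k] {r : k}

noncomputable def dilation (hr : r ≠ 0) : RatFunc k →+* RatFunc k :=
  mapRingHom (R := k) (S := k) (compRingHom (Polynomial.C r * Polynomial.X))
    (nonZeroDivisors_le_comap_nonZeroDivisors_of_injective _ (compRingHom_C_mul_X_injective hr))

theorem dilation_div (hr : r ≠ 0) (p q : k[X]) :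
    dilation hr (algebraMap k[X] (RatFunc k) p / algebraMap k[X] (RatFunc k) q) =
      algebraMap k[X] (RatFunc k) (p.comp (Polynomial.C r * Polynomial.X)) /
        algebraMap k[X] (RatFunc k) (q.comp (Polynomial.C r * Polynomial.X)) := by
  rw [dilation, coe_mapRingHom_eq_coe_map, map_apply_div]; rfl

@[simp]
theorem dilation_algebraMap (hr : r ≠ 0) (p : k[X]) :
    dilation hr (algebraMap k[X] (RatFunc k) p) =
      algebraMap k[X] (RatFunc k) (p.comp (Polynomial.C r * Polynomial.X)) := by
  simpa using dilation_div hr p 1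

@[simp]
theorem dilation_C (hr : r ≠ 0) (a : k) : dilation hr (C a) = C a := by
  rw [← algebraMap_C, dilation_algebraMap, C_comp]

@[simp]
theorem dilation_X (hr : r ≠ 0) : dilation hr X = C r * X := by
  rw [← algebraMap_X, dilation_algebraMap, X_comp, map_mul, algebraMap_C]

theorem exists_C_eq_of_dilation_eq (hr0 : r ≠ 0) (hr : Function.Injective (r ^ · : ℕ → k))
    {a : RatFunc k} (ha : dilation hr0 a = a) : ∃ c, C c = a := by
  have hden : ∀ p : k[X], p ≠ 0 → algebraMap k[X] (RatFunc k) p ≠ 0 := fun _ => algebraMap_ne_zero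
  have hcomp : (a.denom.comp (Polynomial.C r * Polynomial.X)) ≠ 0 :=
    (comp_C_mul_X_eq_zero_iff (mem_nonZeroDivisors_of_ne_zero hr0)).not.mpr a.denom_ne_zero
  rw [← num_div_denom a, dilation_div, div_eq_div_iff (hden _ hcomp) (hden _ a.denom_ne_zero),
    ← map_mul, ← map_mul] at ha
  obtain ⟨c, hc⟩ := exists_eq_C_mul_of_comp_C_mul_X_mul_eq hr0 hr (isCoprime_num_denom a)
    a.denom_ne_zero (algebraMap_injective k ha)
  refine ⟨c, ?_⟩
  rw [← num_div_denom a, hc, map_mul, algebraMap_C,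
    mul_div_cancel_right₀ _ (hden _ a.denom_ne_zero)]

theorem comp_algebraMap_eq_algebraMap_comp_dilation {L : Type*} [Field L] [Algebra (RatFunc k) L]
    (hr : r ≠ 0) {τ : L →+* L}
    (hC : ∀ a, τ (algebraMap (RatFunc k) L (C a)) = algebraMap (RatFunc k) L (C a))
    (hX : τ (algebraMap (RatFunc k) L X) = algebraMap (RatFunc k) L (C r * X)) :
    τ.comp (algebraMap (RatFunc k) L) = (algebraMap (RatFunc k) L).comp (dilation hr) := by
  refine IsLocalization.ringHom_ext (nonZeroDivisors k[X]) (Polynomial.ringHom_ext (fun a => ?_) ?_)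
  · simpa using hC a
  · simpa using hX

theorem exists_algebraMap_C_eq_of_fixed {L : Type*} [IsAlgClosed k] [Field L]
    [Algebra (RatFunc k) L] (hr0 : r ≠ 0) (hr : Function.Injective (r ^ · : ℕ → k))
    {τ : L →+* L}
    (hC : ∀ a, τ (algebraMap (RatFunc k) L (C a)) = algebraMap (RatFunc k) L (C a))
    (hX : τ (algebraMap (RatFunc k) L X) = algebraMap (RatFunc k) L (C r * X)) {x : L}
    (hx : IsIntegral (RatFunc k) x) (hτx : τ x = x) : ∃ c, algebraMap (RatFunc k) L (C c) = x := by
  have hfix := minpoly_map_eq_self (comp_algebraMap_eq_algebraMap_comp_dilation hr0 hC hX) hx hτx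
  refine IsAlgClosed.mem_range_of_minpoly_mem_lifts C hx ((lifts_iff_coeff_lifts _).mpr fun i => ?_)
  exact exists_C_eq_of_dilation_eq hr0 hr (by rw [← coeff_map, hfix])

end RatFunc

namespace RingAut

variable {R : Type*}

theorem zpow_apply_eq_self_of_apply_eq_self [Semiring R] {σ : RingAut R} {x : R} (h : σ x = x)
    (n : ℤ) : (σ ^ n) x = x :=
  MulAction.mem_stabilizer_iff.mp
    (zpow_mem (MulAction.mem_stabilizer_iff.mpr h : σ ∈ MulAction.stabilizer _ x) n)

theorem zpow_apply_eq_zpow_mul [Field R] {σ : RingAut R} {c x : R} (hc : σ c = c)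
    (hc0 : c ≠ 0) (h : σ x = c * x) (n : ℤ) : (σ ^ n) x = c ^ n * x := by
  have hinv : σ⁻¹ x = c⁻¹ * x :=
    σ.injective (by rw [show σ (σ⁻¹ x) = x from σ.apply_symm_apply x, map_mul, map_inv₀, hc, h,
      inv_mul_cancel_left₀ hc0])
  have hfix := zpow_apply_eq_self_of_apply_eq_self hc
  induction n using Int.induction_on with
  | zero => simp
  | succ n ih =>
    rw [zpow_add_one, mul_apply, h, map_mul, hfix, ih, zpow_add_one₀ hc0, mul_left_comm, mul_assoc]
  | pred n ih =>
    rw [zpow_sub_one, mul_apply, hinv, map_mul, map_inv₀, hfix, ih, zpow_sub_one₀ hc0,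
      mul_left_comm, mul_assoc]

end RingAut

theorem exists_eq_map_mul_of_zpow_eq_map_mul {k L : Type*} [Field k] [IsAlgClosed k] [Field L]
    [IsAlgClosed L] (g : k →+* L) {n : ℤ} (hn : n ≠ 0) {α t : L} {d : k}
    (h : α ^ n = g d * t) : ∃ c β, β ^ n = t ∧ α = g c * β := by
  obtain rfl | hα := eq_or_ne α 0
  · obtain ⟨β, hβ⟩ := IsAlgClosed.exists_zpow_eq t hn
    exact ⟨0, β, hβ, by simp⟩
  have hαn : α ^ n ≠ 0 := zpow_ne_zero n hα
  have hd : g d ≠ 0 := left_ne_zero_of_mul (h ▸ hαn)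
  obtain ⟨c, rfl⟩ := IsAlgClosed.exists_zpow_eq d hn
  have hc : g c ≠ 0 := fun hc => hd (by rw [map_zpow₀, hc, zero_zpow n hn])
  refine ⟨c, α / g c, ?_, (mul_div_cancel₀ _ hc).symm⟩
  rw [div_zpow, ← map_zpow₀, h, mul_div_cancel_left₀ _ hd]

theorem stmt15_general {k : Type*} [Field k] [IsAlgClosed k]
    (q : k) (hq0 : q ≠ 0) (hq : ∀ n : ℕ, 0 < n → q ^ n ≠ 1)
    (σ : RingAut (AlgebraicClosure (RatFunc k)))
    (hσk : ∀ a : k, σ (algebraMap (RatFunc k) (AlgebraicClosure (RatFunc k)) (RatFunc.C a))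
      = algebraMap (RatFunc k) (AlgebraicClosure (RatFunc k)) (RatFunc.C a))
    (hσt : σ (algebraMap (RatFunc k) (AlgebraicClosure (RatFunc k)) RatFunc.X)
      = algebraMap (RatFunc k) (AlgebraicClosure (RatFunc k)) (RatFunc.C q) *
        algebraMap (RatFunc k) (AlgebraicClosure (RatFunc k)) RatFunc.X)
    (α : AlgebraicClosure (RatFunc k)) (n : ℤ) (hn : n ≠ 0) (m : ℤ)
    (hα : (σ ^ n) α =
      (algebraMap (RatFunc k) (AlgebraicClosure (RatFunc k)) (RatFunc.C q)) ^ m * α) :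
    ∃ (c : k) (β : AlgebraicClosure (RatFunc k)),
      β ^ n = (algebraMap (RatFunc k) (AlgebraicClosure (RatFunc k)) RatFunc.X) ^ m ∧
      α = algebraMap (RatFunc k) (AlgebraicClosure (RatFunc k)) (RatFunc.C c) * β := by
  set φ := algebraMap (RatFunc k) (AlgebraicClosure (RatFunc k))
  have hQ : φ (RatFunc.C q) ≠ 0 := by simpa using hq0
  have hTm : φ RatFunc.X ^ m ≠ 0 := zpow_ne_zero m (by simpa using RatFunc.X_ne_zero)
  have hσn : (σ ^ n) (φ RatFunc.X) = φ (RatFunc.C (q ^ n) * RatFunc.X) := by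
    rw [RingAut.zpow_apply_eq_zpow_mul (hσk q) hQ hσt n, map_mul, map_zpow₀, map_zpow₀]
  have hfixed : (σ ^ n) (α ^ n / φ RatFunc.X ^ m) = α ^ n / φ RatFunc.X ^ m := by
    rw [map_div₀, map_zpow₀, map_zpow₀, hα, hσn, map_mul, map_zpow₀, map_zpow₀, mul_zpow,
      mul_zpow, ← zpow_mul, ← zpow_mul, mul_comm m n, mul_div_mul_left _ _ (zpow_ne_zero _ hQ)]
  have hq' : ¬IsOfFinOrder q := fun h =>
    let ⟨N, hN, hqN⟩ := isOfFinOrder_iff_pow_eq_one.mp h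
    hq N hN hqN
  obtain ⟨d, hd⟩ := RatFunc.exists_algebraMap_C_eq_of_fixed (τ := (σ ^ n).toRingHom)
    (zpow_ne_zero n hq0) (injective_zpow_pow_of_not_isOfFinOrder hq0 hq' hn)
    (fun a => RingAut.zpow_apply_eq_self_of_apply_eq_self (hσk a) n) hσn
    (Algebra.IsIntegral.isIntegral _) hfixed
  exact exists_eq_map_mul_of_zpow_eq_map_mul (φ.comp RatFunc.C) hn
    ((div_eq_iff hTm).mp hd.symm)

/-- Lemma 3.9: let `k` be algebraically closed of characteristic zero, `q ∈ k` not a root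
of unity, and `σ` an extension to the algebraic closure of `k(t)` of the `q`-shift
automorphism `t ↦ qt` of `k(t)`.  If `σ^n α = q^m α` for some nonzero integer `n` and
integer `m`, then `α = c · t^{m/n}` for some `c ∈ k`, where `t^{m/n}` denotes a root `β`
of `Y^n = t^m` in the algebraic closure. -/
theorem stmt15 {k : Type*} [Field k] [CharZero k] [IsAlgClosed k]
    (q : k) (hq0 : q ≠ 0) (hq : ∀ n : ℕ, 0 < n → q ^ n ≠ 1)
    (σ : RingAut (AlgebraicClosure (RatFunc k)))
    (hσk : ∀ a : k, σ (algebraMap (RatFunc k) (AlgebraicClosure (RatFunc k)) (RatFunc.C a))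
      = algebraMap (RatFunc k) (AlgebraicClosure (RatFunc k)) (RatFunc.C a))
    (hσt : σ (algebraMap (RatFunc k) (AlgebraicClosure (RatFunc k)) RatFunc.X)
      = algebraMap (RatFunc k) (AlgebraicClosure (RatFunc k)) (RatFunc.C q) *
        algebraMap (RatFunc k) (AlgebraicClosure (RatFunc k)) RatFunc.X)
    (α : AlgebraicClosure (RatFunc k)) (n : ℤ) (hn : n ≠ 0) (m : ℤ)
    (hα : (σ ^ n) α =
      (algebraMap (RatFunc k) (AlgebraicClosure (RatFunc k)) (RatFunc.C q)) ^ m * α) :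
    ∃ (c : k) (β : AlgebraicClosure (RatFunc k)),
      β ^ n = (algebraMap (RatFunc k) (AlgebraicClosure (RatFunc k)) RatFunc.X) ^ m ∧
      α = algebraMap (RatFunc k) (AlgebraicClosure (RatFunc k)) (RatFunc.C c) * β :=
  stmt15_general q hq0 hq σ hσk hσt α n hn m hα
end
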